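/- For every w > 0, the following are equivalent: (i) w satisfies all energy and data constraints, i.e., for every u with 0 ≤ u ≤ m−1, ∑_{l=1}^{u+1} s·max(w − 1/γ_l, 0) ≤ E_u, and for every v with 0 ≤ v ≤ m−1, ∑_{l=1}^{v+1} s·W·log₂(1 + max(w − 1/γ_l, 0)·γ_l) ≤ D_v; (ii) w ≤ F(w). -/

import Mathlib

open Finset

/-- Energy water-level bound `w^e(w)`. -/
noncomputable def wEnergy (m : ℕ) (γ : ℕ → ℝ) (s : ℝ) (E : ℕ → ℝ) (w : ℝ) : ℝ :=
  ⨅ u : Fin m,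
    (E u + s * ∑ l ∈ Finset.Icc 1 ((u : ℕ) + 1), min (1 / γ l) w) /
      (s * ((u : ℕ) + 1))

/-- Data water-level bound `w^b(w)`. -/
noncomputable def wData (m : ℕ) (γ : ℕ → ℝ) (s W : ℝ) (D : ℕ → ℝ) (w : ℝ) : ℝ :=
  (2 : ℝ) ^
    (⨅ v : Fin m,
      (D v + s * W * ∑ l ∈ Finset.Icc 1 ((v : ℕ) + 1),
          Real.logb 2 (min (1 / γ l) w)) /
        (s * W * ((v : ℕ) + 1)))

/-- The iteration map `F(w) = min(w^e(w), w^b(w))`. -/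
noncomputable def Fmap (m : ℕ) (γ : ℕ → ℝ) (s W : ℝ) (E D : ℕ → ℝ) (w : ℝ) : ℝ :=
  min (wEnergy m γ s E w) (wData m γ s W D w)

/-!
Since `max (w - 1/γ) 0 = w - min (1/γ) w` and
`log₂ (1 + max (w - 1/γ) 0 · γ) = log₂ w - log₂ (min (1/γ) w)`, the `u`-th cumulative constraint
is affine in `w` (resp. `log₂ w`) with slope `s (u+1)` (resp. `s W (u+1)`), so it rearranges to
`w` (resp. `log₂ w`) being at most the `u`-th term of the minimum defining `w^e(w)` (resp. the
exponent of `w^b(w)`). Taking all `u` together gives `w ≤ F(w)`.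
-/

lemma max_sub_zero_eq_sub_min {α : Type*} [AddCommGroup α] [LinearOrder α] [IsOrderedAddMonoid α]
    (a w : α) : max (w - a) 0 = w - min a w := by
  rw [← max_sub_sub_left, sub_self]

lemma logb_one_add_max_sub_one_div_mul {b γ w : ℝ} (hγ : 0 < γ) (hw : 0 < w) :
    Real.logb b (1 + max (w - 1 / γ) 0 * γ) = Real.logb b w - Real.logb b (min (1 / γ) w) := by
  rcases le_total (1 / γ) w with h | h
  · have hprod : 1 + (w - 1 / γ) * γ = w * γ := by field_simp; ring
    rw [min_eq_left h, max_eq_left (sub_nonneg.2 h), hprod, Real.logb_mul hw.ne' hγ.ne', one_div,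
      Real.logb_inv]
    ring
  · rw [min_eq_right h, max_eq_right (sub_nonpos.2 h)]
    simp

lemma sum_mul_sub_le_iff_le_div {ι : Type*} {S : Finset ι} (hS : S.Nonempty) {k : ℝ} (hk : 0 < k)
    (c B : ℝ) (f : ι → ℝ) :
    ∑ l ∈ S, k * (c - f l) ≤ B ↔ c ≤ (B + k * ∑ l ∈ S, f l) / (k * #S) := by
  have hpos : 0 < k * (#S : ℝ) := mul_pos hk (by exact_mod_cast hS.card_pos)
  rw [le_div_iff₀ hpos, ← Finset.mul_sum, Finset.sum_sub_distrib, Finset.sum_const, nsmul_eq_mul]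
  constructor <;> intro h <;> linarith

lemma sum_Icc_mul_max_sub_le_iff (γ : ℕ → ℝ) {k : ℝ} (hk : 0 < k) (u : ℕ) (B w : ℝ) :
    ∑ l ∈ Icc 1 (u + 1), k * max (w - 1 / γ l) 0 ≤ B ↔
      w ≤ (B + k * ∑ l ∈ Icc 1 (u + 1), min (1 / γ l) w) / (k * ((u : ℝ) + 1)) := by
  simp only [max_sub_zero_eq_sub_min]
  simpa using sum_mul_sub_le_iff_le_div (nonempty_Icc.2 (by omega : 1 ≤ u + 1)) hk w B _

lemma sum_Icc_mul_logb_le_iff {γ : ℕ → ℝ} {u : ℕ} (hγ : ∀ l ∈ Icc 1 (u + 1), 0 < γ l) {k : ℝ}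
    (hk : 0 < k) (b B : ℝ) {w : ℝ} (hw : 0 < w) :
    ∑ l ∈ Icc 1 (u + 1), k * Real.logb b (1 + max (w - 1 / γ l) 0 * γ l) ≤ B ↔
      Real.logb b w ≤
        (B + k * ∑ l ∈ Icc 1 (u + 1), Real.logb b (min (1 / γ l) w)) / (k * ((u : ℝ) + 1)) := by
  rw [sum_congr rfl fun l hl ↦ by rw [logb_one_add_max_sub_one_div_mul (hγ l hl) hw]]
  simpa using sum_mul_sub_le_iff_le_div (nonempty_Icc.2 (by omega : 1 ≤ u + 1)) hk _ B _

lemma forall_le_sub_one_iff_forall_fin {m : ℕ} (hm : 1 ≤ m) (P : ℕ → Prop) :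
    (∀ u, u ≤ m - 1 → P u) ↔ ∀ u : Fin m, P u := by
  rw [Fin.forall_iff]
  exact forall_congr' fun u ↦ imp_congr_left (by omega)

theorem stmt_9_general (m : ℕ) (hm : 1 ≤ m) (γ : ℕ → ℝ)
    (hγ : ∀ l, 1 ≤ l → l ≤ m → 0 < γ l) (s W : ℝ) (hs : 0 < s) (hW : 0 < W)
    (E D : ℕ → ℝ) (w : ℝ) (hw : 0 < w) :
    ((∀ u, u ≤ m - 1 →
        ∑ l ∈ Finset.Icc 1 (u + 1), s * max (w - 1 / γ l) 0 ≤ E u) ∧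
     (∀ v, v ≤ m - 1 →
        ∑ l ∈ Finset.Icc 1 (v + 1),
            s * W * Real.logb 2 (1 + max (w - 1 / γ l) 0 * γ l) ≤ D v)) ↔
      w ≤ Fmap m γ s W E D w := by
  have : Nonempty (Fin m) := ⟨⟨0, hm⟩⟩
  have hγ_Icc (v : Fin m) : ∀ l ∈ Icc 1 ((v : ℕ) + 1), 0 < γ l := fun l hl ↦ by
    obtain ⟨hl₁, hl₂⟩ := mem_Icc.1 hl
    exact hγ l hl₁ (by omega)
  rw [Fmap, le_min_iff, wEnergy, wData, ← Real.logb_le_iff_le_rpow one_lt_two hw,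
    le_ciInf_iff (Set.finite_range _).bddBelow, le_ciInf_iff (Set.finite_range _).bddBelow,
    forall_le_sub_one_iff_forall_fin hm, forall_le_sub_one_iff_forall_fin hm]
  exact and_congr (forall_congr' fun u ↦ sum_Icc_mul_max_sub_le_iff γ hs u (E u) w)
    (forall_congr' fun v ↦ sum_Icc_mul_logb_le_iff (hγ_Icc v) (mul_pos hs hW) 2 (D v) hw)

/-- For w > 0, satisfying all cumulative energy and data constraints
is equivalent to `w ≤ F(w)`. -/
theorem stmt_9 (m : ℕ) (hm : 1 ≤ m) (γ : ℕ → ℝ)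
    (hγ : ∀ l, 1 ≤ l → l ≤ m → 0 < γ l) (s W : ℝ) (hs : 0 < s) (hW : 0 < W)
    (E D : ℕ → ℝ) (hE : ∀ u, u ≤ m - 1 → 0 ≤ E u) (hD : ∀ v, v ≤ m - 1 → 0 ≤ D v)
    (w : ℝ) (hw : 0 < w) :
    ((∀ u, u ≤ m - 1 →
        ∑ l ∈ Finset.Icc 1 (u + 1), s * max (w - 1 / γ l) 0 ≤ E u) ∧
     (∀ v, v ≤ m - 1 →
        ∑ l ∈ Finset.Icc 1 (v + 1),
            s * W * Real.logb 2 (1 + max (w - 1 / γ l) 0 * γ l) ≤ D v)) ↔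
      w ≤ Fmap m γ s W E D w :=
  stmt_9_general m hm γ hγ s W hs hW E D w hw
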